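/- arXiv:2407.19840 — 3 statements merged into one kernel-verified Lean document; each statement's English description precedes it below -/
import Mathlib

section
/- Let P ⊆ S² be a finite set contained in a hemisphere, let C be the smallest spherical circle enclosing P, with center c ∈ S² and radius r < π/2, and let B(c̃, r̃) be the smallest Euclidean ball enclosing P, with center c̃ ∈ ℝ³ and radius r̃. Then c̃ = (cos r)·c and r̃ = sin r. -/
open scoped RealInnerProductSpace
open Real

local notation "E" => EuclideanSpace ℝ (Fin 3)

/-!
For unit vectors the cap `{x : cos r ≤ ⟪c, x⟫}` is exactly the part of the sphere inside the ball
`B(cos r • c, sin r)`, since `‖x - s • u‖² = 1 + s² - 2 s ⟪u, x⟫` for `‖x‖ = ‖u‖ = 1`.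
So the ball of the smallest circle encloses `P`, giving `r̃ ≤ sin r`. Conversely, any enclosing
ball `B(a, ρ)` with `a ≠ 0` puts `P` in the cap around `a / ‖a‖` of cosine
`t = (1 + ‖a‖² - ρ²) / (2‖a‖)`; minimality of the circle gives `t ≤ cos r`, which rearranges to
`ρ² ≥ (‖a‖ - cos r)² + sin² r ≥ sin² r`. Hence `r̃ = sin r`, and the centre is pinned down by
uniqueness of the smallest enclosing ball (Apollonius' theorem at the midpoint of two centres).
-/

namespace Real

lemma cos_le_of_arccos_le {y r : ℝ} (hy : -1 ≤ y) (hr : r ≤ π) (h : arccos y ≤ r) :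
    cos r ≤ y := by
  rcases le_or_gt y 1 with hy₁ | hy₁
  · simpa only [cos_arccos hy hy₁] using cos_le_cos_of_nonneg_of_le_pi (arccos_nonneg y) hr h
  · linarith [cos_le_one r]

lemma le_cos_of_le_arccos {t r : ℝ} (hr : 0 ≤ r) (ht : t ≤ 1) (h : r ≤ arccos t) :
    t ≤ cos r := by
  rcases le_or_gt (-1) t with ht₁ | ht₁
  · simpa only [cos_arccos ht₁ ht] using cos_le_cos_of_nonneg_of_le_pi hr (arccos_le_pi t) h
  · linarith [neg_one_le_cos r]

end Real

section InnerProductSpace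

variable {V : Type*} [NormedAddCommGroup V] [InnerProductSpace ℝ V]

lemma mem_closedBall_cos_smul_of_cos_le_inner {x c : V} {r : ℝ} (hx : ‖x‖ = 1) (hc : ‖c‖ = 1)
    (hr₀ : 0 ≤ r) (hr : r ≤ π / 2) (h : cos r ≤ ⟪c, x⟫) :
    x ∈ Metric.closedBall (cos r • c) (sin r) := by
  have hcos : 0 ≤ cos r := cos_nonneg_of_mem_Icc ⟨by linarith [pi_pos], hr⟩
  have hsin : 0 ≤ sin r := sin_nonneg_of_nonneg_of_le_pi hr₀ (by linarith [pi_pos])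
  have hsq : ‖x - cos r • c‖ ^ 2 ≤ sin r ^ 2 := by
    rw [norm_sub_sq_real, real_inner_smul_right, real_inner_comm, norm_smul, hx, hc,
      norm_of_nonneg hcos]
    nlinarith [sin_sq_add_cos_sq r]
  rw [Metric.mem_closedBall, dist_eq_norm]
  exact (sq_le_sq₀ (norm_nonneg _) hsin).mp hsq

lemma le_inner_normalize_of_mem_closedBall {x a : V} {ρ : ℝ} (hx : ‖x‖ = 1) (ha : a ≠ 0)
    (h : x ∈ Metric.closedBall a ρ) :
    (1 + ‖a‖ ^ 2 - ρ ^ 2) / (2 * ‖a‖) ≤ ⟪‖a‖⁻¹ • a, x⟫ := by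
  have hna : 0 < ‖a‖ := norm_pos_iff.mpr ha
  rw [Metric.mem_closedBall, dist_eq_norm] at h
  have hsq : ‖x - a‖ ^ 2 ≤ ρ ^ 2 := pow_le_pow_left₀ (norm_nonneg _) h 2
  rw [norm_sub_sq_real, hx] at hsq
  rw [real_inner_smul_left, real_inner_comm, div_le_iff₀ (by positivity)]
  field_simp
  linarith

lemma eq_of_subset_closedBall_of_forall_le {S : Set V} {a b : V} {ρ : ℝ}
    (ha : S ⊆ Metric.closedBall a ρ) (hb : S ⊆ Metric.closedBall b ρ)
    (hmin : ∀ c r, S ⊆ Metric.closedBall c r → ρ ≤ r) : a = b := by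
  rcases S.eq_empty_or_nonempty with rfl | ⟨x₀, hx₀⟩
  · linarith [hmin a (ρ - 1) (Set.empty_subset _)]
  have hmid : ∀ x ∈ S, dist x (midpoint ℝ a b) ^ 2 ≤ ρ ^ 2 - (dist a b / 2) ^ 2 := fun x hx => by
    have hxa := Metric.mem_closedBall.mp (ha hx)
    have hxb := Metric.mem_closedBall.mp (hb hx)
    have := EuclideanGeometry.dist_sq_add_dist_sq_eq_two_mul_dist_midpoint_sq_add_half_dist_sq x a b
    nlinarith [dist_nonneg (x := x) (y := a), dist_nonneg (x := x) (y := b)]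
  have hρ : 0 ≤ ρ := dist_nonneg.trans (Metric.mem_closedBall.mp (ha hx₀))
  have hle : ρ ≤ √(ρ ^ 2 - (dist a b / 2) ^ 2) := hmin _ _ fun x hx =>
    Metric.mem_closedBall.mpr (le_sqrt_of_sq_le (hmid x hx))
  have hab : (dist a b / 2) ^ 2 ≤ 0 := by
    nlinarith [sq_sqrt ((sq_nonneg _).trans (hmid x₀ hx₀)), pow_le_pow_left₀ hρ hle 2]
  exact dist_eq_zero.mp (by nlinarith [dist_nonneg (x := a) (y := b)])

end InnerProductSpace

theorem smallest_ball_from_smallest_circle (P : Finset E) (hP : P.Nonempty)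
    (hsphere : ∀ x ∈ P, ‖x‖ = 1)
    (c : E) (hc : ‖c‖ = 1) (r : ℝ) (hr0 : 0 ≤ r) (hr : r < π / 2)
    (hencl : ∀ x ∈ P, Real.arccos ⟪c, x⟫ ≤ r)
    (hmin : ∀ (c' : E) (r' : ℝ), ‖c'‖ = 1 → (∀ x ∈ P, Real.arccos ⟪c', x⟫ ≤ r') → r ≤ r')
    (ct : E) (rt : ℝ)
    (hbencl : ∀ x ∈ P, x ∈ Metric.closedBall ct rt)
    (hbmin : ∀ (c' : E) (r' : ℝ), (∀ x ∈ P, x ∈ Metric.closedBall c' r') → rt ≤ r') :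
    ct = (Real.cos r) • c ∧ rt = Real.sin r := by
  obtain ⟨x₀, hx₀⟩ := hP
  have hball : ∀ x ∈ P, x ∈ Metric.closedBall (cos r • c) (sin r) := fun x hx =>
    mem_closedBall_cos_smul_of_cos_le_inner (hsphere x hx) hc hr0 hr.le <|
      cos_le_of_arccos_le (neg_one_le_real_inner_of_norm_eq_one hc (hsphere x hx))
        (by linarith [pi_pos]) (hencl x hx)
  have hrt_le : rt ≤ sin r := hbmin _ _ hball
  have hct : ct ≠ 0 := by
    rintro rfl
    have h₁ := Metric.mem_closedBall.mp (hbencl x₀ hx₀)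
    rw [dist_zero_right, hsphere x₀ hx₀] at h₁
    linarith [sin_pi_div_two ▸ sin_lt_sin_of_lt_of_le_pi_div_two (by linarith) le_rfl hr]
  have hnct : 0 < ‖ct‖ := norm_pos_iff.mpr hct
  set t := (1 + ‖ct‖ ^ 2 - rt ^ 2) / (2 * ‖ct‖)
  have hcap : ∀ x ∈ P, t ≤ ⟪‖ct‖⁻¹ • ct, x⟫ := fun x hx =>
    le_inner_normalize_of_mem_closedBall (hsphere x hx) hct (hbencl x hx)
  have ht : t ≤ cos r :=
    le_cos_of_le_arccos hr0
      ((hcap x₀ hx₀).trans (real_inner_le_one_of_norm_eq_one (norm_smul_inv_norm hct)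
        (hsphere x₀ hx₀)))
      (hmin _ _ (norm_smul_inv_norm hct) fun x hx => arccos_le_arccos (hcap x hx))
  have hrt : rt = sin r := by
    rw [div_le_iff₀ (by positivity)] at ht
    have hrt₀ : 0 ≤ rt := dist_nonneg.trans (Metric.mem_closedBall.mp (hbencl x₀ hx₀))
    nlinarith [sin_sq_add_cos_sq r, sq_nonneg (‖ct‖ - cos r)]
  refine ⟨eq_of_subset_closedBall_of_forall_le (S := (P : Set E)) hbencl ?_ hbmin, hrt⟩
  rwa [hrt]
end

section
/- Let b₁, b₂, b₃ ∈ S² be linearly independent and let v ∈ ℝ³ be the unique solution of ⟪bᵢ, v⟫ = 1 for i = 1, 2, 3. Then ‖v‖ ≥ 1, and all three points bᵢ lie on the spherical circle with center v/‖v‖ and radius arccos(1/‖v‖). -/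
open scoped RealInnerProductSpace
open Real

local notation "E" => EuclideanSpace ℝ (Fin 3)

theorem circle_center_norm_ge_one (b₁ b₂ b₃ : E)
    (h₁ : ‖b₁‖ = 1) (h₂ : ‖b₂‖ = 1) (h₃ : ‖b₃‖ = 1)
    (hli : LinearIndependent ℝ ![b₁, b₂, b₃])
    (v : E) (hv₁ : ⟪b₁, v⟫ = 1) (hv₂ : ⟪b₂, v⟫ = 1) (hv₃ : ⟪b₃, v⟫ = 1) :
    1 ≤ ‖v‖ ∧
      Real.arccos ⟪‖v‖⁻¹ • v, b₁⟫ = Real.arccos ‖v‖⁻¹ ∧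
      Real.arccos ⟪‖v‖⁻¹ • v, b₂⟫ = Real.arccos ‖v‖⁻¹ ∧
      Real.arccos ⟪‖v‖⁻¹ • v, b₃⟫ = Real.arccos ‖v‖⁻¹ := by
  have hn : (1:ℝ) ≤ ‖v‖ := by
    calc (1:ℝ) = ⟪b₁, v⟫ := hv₁.symm
    _ ≤ ‖b₁‖ * ‖v‖ := real_inner_le_norm _ _
    _ = ‖v‖ := by rw [h₁, one_mul]
  refine ⟨hn, ?_, ?_, ?_⟩ <;>
    rw [real_inner_smul_left, real_inner_comm] <;>
    simp [hv₁, hv₂, hv₃]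
end

section
/- Let P ⊆ S² be a finite set and suppose the smallest Euclidean enclosing ball of P has radius r̃ < 1 with center c̃. Then c̃ ≠ 0, the sphere ∂B(c̃, r̃) intersects S² in a spherical circle, and the spherical circle with center c̃/‖c̃‖ and radius arcsin r̃ encloses P; moreover no spherical circle of smaller radius encloses P. -/
/-!
The ball `B(c, r)` meets the unit sphere in the cap `⟪u, x⟫ ≥ t`, where `u = c / ‖c‖`
and `2 ‖c‖ t = 1 + ‖c‖² - r²`. The cap lies in the ball `B(t u, √(1 - t²))` over its base
circle, so minimality of `r` gives `r² + t² ≤ 1`, and then `(‖c‖ - t)² ≤ 0`: the smallest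
ball is exactly the ball over its base circle, `‖c‖ = √(1 - r²)`, and its trace on the sphere
is the spherical circle of angular radius `arcsin r` about `u`. Conversely a spherical cap of
centre `c'` and angular radius `r' < π / 2` lies in the ball `B(cos r' • c', sin r')`, hence
`r ≤ sin r'`.
-/

open scoped RealInnerProductSpace
open Real

local notation "E" => EuclideanSpace ℝ (Fin 3)

open Metric Set

namespace Real

theorem arccos_le_iff_cos_le {y θ : ℝ} (hy : y ∈ Icc (-1) 1) (hθ : θ ∈ Icc 0 π) :
    arccos y ≤ θ ↔ cos θ ≤ y := by
  simpa only [arccos_cos hθ.1 hθ.2] using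
    strictAntiOn_arccos.le_iff_ge hy ⟨neg_one_le_cos θ, cos_le_one θ⟩

theorem arccos_eq_iff_cos_eq {y θ : ℝ} (hy : y ∈ Icc (-1) 1) (hθ : θ ∈ Icc 0 π) :
    arccos y = θ ↔ cos θ = y := by
  simpa only [arccos_cos hθ.1 hθ.2, eq_comm (a := cos θ)] using
    arccos_injOn.eq_iff hy ⟨neg_one_le_cos θ, cos_le_one θ⟩

end Real

section SmallestEnclosingBall

variable {X : Type*} [PseudoMetricSpace X]

def IsSmallestEnclosingBall (P : Set X) (c : X) (r : ℝ) : Prop :=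
  P ⊆ closedBall c r ∧ ∀ c' r', P ⊆ closedBall c' r' → r ≤ r'

namespace IsSmallestEnclosingBall

variable {P : Set X} {c : X} {r : ℝ}

theorem nonempty (h : IsSmallestEnclosingBall P c r) : P.Nonempty := by
  by_contra hP
  have := h.2 c (r - 1) (by simp [not_nonempty_iff_eq_empty.1 hP])
  linarith

theorem radius_nonneg (h : IsSmallestEnclosingBall P c r) : 0 ≤ r :=
  have ⟨_, hx⟩ := h.nonempty
  dist_nonneg.trans (h.1 hx)

end IsSmallestEnclosingBall

end SmallestEnclosingBall

section UnitSphere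

variable {V : Type*} [NormedAddCommGroup V] [InnerProductSpace ℝ V]

theorem dist_sq_eq_of_norm_eq_one {x : V} (hx : ‖x‖ = 1) (c : V) :
    dist x c ^ 2 = 1 - 2 * ⟪c, x⟫ + ‖c‖ ^ 2 := by
  rw [dist_eq_norm, norm_sub_sq_real, hx, real_inner_comm]
  ring

theorem dist_smul_le_sqrt_of_le_inner {u x : V} (hu : ‖u‖ = 1) (hx : ‖x‖ = 1) {t : ℝ}
    (ht : 0 ≤ t) (htx : t ≤ ⟪u, x⟫) : dist x (t • u) ≤ √(1 - t ^ 2) := by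
  apply le_sqrt_of_sq_le
  rw [dist_sq_eq_of_norm_eq_one hx, real_inner_smul_left, norm_smul, hu, norm_of_nonneg ht]
  nlinarith

namespace IsSmallestEnclosingBall

variable {P : Set V} {c : V} {r : ℝ}

theorem norm_center_sq (h : IsSmallestEnclosingBall P c r) (hP : P ⊆ sphere 0 1) (hr : r < 1) :
    ‖c‖ ^ 2 = 1 - r ^ 2 := by
  have hr0 := h.radius_nonneg
  have hunit : ∀ x ∈ P, ‖x‖ = 1 := fun x hx => mem_sphere_zero_iff_norm.1 (hP hx)
  have hinner : ∀ x ∈ P, 1 + ‖c‖ ^ 2 - r ^ 2 ≤ 2 * ⟪c, x⟫ := fun x hx => by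
    have hd : dist x c ≤ r := h.1 hx
    nlinarith [dist_sq_eq_of_norm_eq_one (hunit x hx) c, dist_nonneg (x := x) (y := c)]
  obtain ⟨x₀, hx₀⟩ := h.nonempty
  set s := ‖c‖
  have hs : 0 < s := by
    have := real_inner_le_norm c x₀
    nlinarith [hinner x₀ hx₀, hunit x₀ hx₀]
  set u : V := s⁻¹ • c
  set t := (1 + s ^ 2 - r ^ 2) / (2 * s)
  have hu : ‖u‖ = 1 := norm_smul_inv_norm (norm_pos_iff.1 hs)
  have htu : ∀ x ∈ P, t ≤ ⟪u, x⟫ := fun x hx => by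
    rw [real_inner_smul_left, div_le_iff₀ (by positivity)]
    nlinarith [hinner x hx, mul_inv_cancel₀ hs.ne']
  have ht : 0 ≤ t := by
    apply div_nonneg _ (by positivity)
    nlinarith
  have hcap : P ⊆ closedBall (t • u) √(1 - t ^ 2) := fun x hx =>
    dist_smul_le_sqrt_of_le_inner hu (hunit x hx) ht (htu x hx)
  have ht1 : t ≤ 1 :=
    (htu x₀ hx₀).trans (real_inner_le_one_of_norm_eq_one hu (hunit x₀ hx₀))
  have hr_sq : r ^ 2 ≤ 1 - t ^ 2 := (le_sqrt hr0 (by nlinarith)).1 (h.2 _ _ hcap)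
  have hts : 2 * s * t = 1 + s ^ 2 - r ^ 2 := by
    simp only [t]
    field_simp
  nlinarith [sq_nonneg (s - t)]

theorem dist_center_sq_sub_sq (h : IsSmallestEnclosingBall P c r) (hP : P ⊆ sphere 0 1)
    (hr : r < 1) {x : V} (hx : ‖x‖ = 1) :
    dist x c ^ 2 - r ^ 2 = 2 * ‖c‖ * (‖c‖ - ⟪‖c‖⁻¹ • c, x⟫) := by
  have hc : ‖c‖ * ⟪‖c‖⁻¹ • c, x⟫ = ⟪c, x⟫ := by
    rw [real_inner_smul_left, ← mul_assoc]
    rcases eq_or_ne c 0 with rfl | hc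
    · simp
    · rw [mul_inv_cancel₀ (norm_ne_zero_iff.2 hc), one_mul]
  rw [dist_sq_eq_of_norm_eq_one hx]
  linear_combination 2 * hc - h.norm_center_sq hP hr

theorem arcsin_radius_le (h : IsSmallestEnclosingBall P c r) (hP : P ⊆ sphere 0 1) {c' : V}
    {r' : ℝ} (hc' : ‖c'‖ = 1) (hcap : ∀ x ∈ P, arccos ⟪c', x⟫ ≤ r') : arcsin r ≤ r' := by
  obtain ⟨x₀, hx₀⟩ := h.nonempty
  have hr'0 : 0 ≤ r' := (arccos_nonneg _).trans (hcap x₀ hx₀)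
  rcases le_or_gt (π / 2) r' with hr' | hr'
  · exact (arcsin_le_pi_div_two r).trans hr'
  have hcos : 0 ≤ cos r' := cos_nonneg_of_mem_Icc ⟨by linarith [pi_pos], hr'.le⟩
  have hsin : 0 ≤ sin r' := sin_nonneg_of_nonneg_of_le_pi hr'0 (by linarith [pi_pos])
  have hball : P ⊆ closedBall (cos r' • c') (sin r') := fun x hx => by
    have hx1 := mem_sphere_zero_iff_norm.1 (hP hx)
    have hcx := (arccos_le_iff_cos_le (real_inner_mem_Icc_of_norm_eq_one hc' hx1)
      ⟨hr'0, by linarith [pi_pos]⟩).1 (hcap x hx)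
    simpa only [mem_closedBall, ← sin_sq, sqrt_sq hsin] using
      dist_smul_le_sqrt_of_le_inner hc' hx1 hcos hcx
  calc arcsin r ≤ arcsin (sin r') := arcsin_le_arcsin (h.2 _ _ hball)
    _ = r' := arcsin_sin (by linarith [pi_pos]) hr'.le

end IsSmallestEnclosingBall

end UnitSphere

theorem smallest_circle_from_smallest_ball_general (P : Finset E)
    (hsphere : ∀ x ∈ P, ‖x‖ = 1)
    (ct : E) (rt : ℝ) (hrt : rt < 1)
    (hencl : ∀ x ∈ P, x ∈ Metric.closedBall ct rt)
    (hmin : ∀ (c' : E) (r' : ℝ), (∀ x ∈ P, x ∈ Metric.closedBall c' r') → rt ≤ r') :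
    ct ≠ 0 ∧
      (∀ x : E, ‖x‖ = 1 → (dist x ct = rt ↔
        Real.arccos ⟪‖ct‖⁻¹ • ct, x⟫ = Real.arcsin rt)) ∧
      (∀ x ∈ P, Real.arccos ⟪‖ct‖⁻¹ • ct, x⟫ ≤ Real.arcsin rt) ∧
      (∀ (c' : E) (r' : ℝ), ‖c'‖ = 1 →
        (∀ x ∈ P, Real.arccos ⟪c', x⟫ ≤ r') → Real.arcsin rt ≤ r') := by
  have hball : IsSmallestEnclosingBall (P : Set E) ct rt := ⟨hencl, hmin⟩
  have hP : (P : Set E) ⊆ sphere 0 1 := fun x hx => mem_sphere_zero_iff_norm.2 (hsphere x hx)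
  have hr0 := hball.radius_nonneg
  have hnorm : ‖ct‖ = cos (arcsin rt) := by
    rw [cos_arcsin, ← hball.norm_center_sq hP hrt, sqrt_sq (norm_nonneg _)]
  have hs : 0 < ‖ct‖ := by
    rw [hnorm, cos_arcsin]
    exact sqrt_pos.2 (by nlinarith)
  have hct : ct ≠ 0 := norm_pos_iff.1 hs
  have harcsin : arcsin rt ∈ Icc 0 π :=
    ⟨arcsin_nonneg.2 hr0, (arcsin_le_pi_div_two rt).trans (by linarith [pi_pos])⟩
  have hinner {x : E} (hx : ‖x‖ = 1) : ⟪‖ct‖⁻¹ • ct, x⟫ ∈ Icc (-1) 1 :=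
    real_inner_mem_Icc_of_norm_eq_one (norm_smul_inv_norm hct) hx
  refine ⟨hct, fun x hx => ?_, fun x hx => ?_,
    fun c' r' hc' hcap => hball.arcsin_radius_le hP hc' hcap⟩
  · rw [arccos_eq_iff_cos_eq (hinner hx) harcsin, ← hnorm, ← sq_eq_sq₀ dist_nonneg hr0,
      ← sub_eq_zero, hball.dist_center_sq_sub_sq hP hrt hx, mul_eq_zero, sub_eq_zero,
      or_iff_right (by positivity)]
  · rw [arccos_le_iff_cos_le (hinner (hsphere x hx)) harcsin, ← hnorm]
    have hd : dist x ct ≤ rt := hencl x hx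
    nlinarith [hball.dist_center_sq_sub_sq hP hrt (hsphere x hx), dist_nonneg (x := x) (y := ct)]

theorem smallest_circle_from_smallest_ball (P : Finset E) (hcard : 2 ≤ P.card)
    (hsphere : ∀ x ∈ P, ‖x‖ = 1)
    (ct : E) (rt : ℝ) (hrt : rt < 1)
    (hencl : ∀ x ∈ P, x ∈ Metric.closedBall ct rt)
    (hmin : ∀ (c' : E) (r' : ℝ), (∀ x ∈ P, x ∈ Metric.closedBall c' r') → rt ≤ r') :
    ct ≠ 0 ∧
      (∀ x : E, ‖x‖ = 1 → (dist x ct = rt ↔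
        Real.arccos ⟪‖ct‖⁻¹ • ct, x⟫ = Real.arcsin rt)) ∧
      (∀ x ∈ P, Real.arccos ⟪‖ct‖⁻¹ • ct, x⟫ ≤ Real.arcsin rt) ∧
      (∀ (c' : E) (r' : ℝ), ‖c'‖ = 1 →
        (∀ x ∈ P, Real.arccos ⟪c', x⟫ ≤ r') → Real.arcsin rt ≤ r') :=
  smallest_circle_from_smallest_ball_general P hsphere ct rt hrt hencl hmin
end
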